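/- Fix reals Ξ > 1, c > -1, Z > 0, ν, λ, and a continuous function ρ : [1,Ξ] → ℝ. Define W(X) := √(X+c)/√Z − ν + (1/2)·∫₁^Ξ ρ(T) dT /((√(X+c)+√(T+c))·√(T+c)), G₂(X|Y) := 4λ²/(√(X+c)·√(Y+c)·(√(X+c)+√(Y+c))²), and for X ≠ Y set G₃(X,Y) := 8λ·(∂/∂Y)[(W(X)−W(Y))/(X−Y)]. Then for all X, Y ≥ 1 with X ≠ Y: (W(X)+ν)·G₂(X|Y) = −λ·G₃(X,Y) − (1/2)·∫₁^Ξ ρ(T)·(G₂(X|Y)−G₂(T|Y))/(X−T) dT, where the integrand is extended continuously to T = X. -/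

import Mathlib

/-!
In the variable `x = √(X + c)` the ansatz reads `W = x/√Z - ν + ½ ∫ g(T)/(x + s_T)` with
`s_T = √(T + c)` and `g = ρ/s`, so the difference quotient of `W` between `X` and `Y'` is
`(1/√Z - ½ ∫ g/((a + s)(b' + s))) / (a + b')` with `a = √(X + c)`, `b' = √(Y' + c)`;
its `Y`-derivative is obtained by differentiating under the integral sign.
On the other side, `G₂(X|Y)/(4λ²) = 1/(a b (a + b)²)`, and a partial fraction identity shows
that the divided difference of `G₂(·|Y)` between `X` and `T` extends continuously to `T = X`
as a combination of `1`, `1/(b + s)` and `1/(b + s)²` with denominator `(a + s) s`.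
Integrated against `ρ`, it produces exactly the integrals appearing in `W(X) + ν` and in `G₃`.
-/

open MeasureTheory Set
open scoped Interval

section ParametricIntegral

variable {α β : ℝ} {g s : ℝ → ℝ}

theorem continuousOn_div_add_pow (hg : ContinuousOn g [[α, β]]) (hs : ContinuousOn s [[α, β]])
    (hs0 : ∀ T ∈ [[α, β]], 0 ≤ s T) {x : ℝ} (hx : 0 < x) (n : ℕ) :
    ContinuousOn (fun T => g T / (x + s T) ^ n) [[α, β]] :=
  hg.div ((continuousOn_const.add hs).pow n) fun T hT => by
    have := hs0 T hT
    positivity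

theorem continuousOn_div_add (hg : ContinuousOn g [[α, β]]) (hs : ContinuousOn s [[α, β]])
    (hs0 : ∀ T ∈ [[α, β]], 0 ≤ s T) {x : ℝ} (hx : 0 < x) :
    ContinuousOn (fun T => g T / (x + s T)) [[α, β]] := by
  simpa using continuousOn_div_add_pow hg hs hs0 hx 1

theorem hasDerivAt_integral_div_add (hg : ContinuousOn g [[α, β]])
    (hs : ContinuousOn s [[α, β]]) (hs0 : ∀ T ∈ [[α, β]], 0 ≤ s T) {y : ℝ} (hy : 0 < y) :
    HasDerivAt (fun x => ∫ T in α..β, g T / (x + s T))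
      (-∫ T in α..β, g T / (y + s T) ^ 2) y := by
  have hmeas : ∀ {f : ℝ → ℝ}, ContinuousOn f [[α, β]] →
      AEStronglyMeasurable f (volume.restrict (Ι α β)) := fun hf =>
    (intervalIntegrable_iff.1 hf.intervalIntegrable).aestronglyMeasurable
  have hpos : ∀ x ∈ Ioi (y / 2), ∀ T ∈ Ι α β, y / 2 < x + s T := fun x hx T hT => by
    have := hs0 T (uIoc_subset_uIcc hT)
    rw [mem_Ioi] at hx
    linarith
  rw [← intervalIntegral.integral_neg]
  refine (intervalIntegral.hasDerivAt_integral_of_dominated_loc_of_deriv_le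
    (F' := fun x T => -(g T / (x + s T) ^ 2)) (bound := fun T => |g T| / (y / 2) ^ 2)
    (Ioi_mem_nhds (half_lt_self hy)) ?_ ?_ ?_ ?_ ?_ ?_).2
  · filter_upwards [Ioi_mem_nhds (half_lt_self hy)] with x hx
    exact hmeas (continuousOn_div_add hg hs hs0 (by rw [mem_Ioi] at hx; linarith))
  · exact (continuousOn_div_add hg hs hs0 hy).intervalIntegrable
  · exact (hmeas (continuousOn_div_add_pow hg hs hs0 hy 2)).neg
  · refine ae_of_all _ fun T hT x hx => ?_
    have h := hpos x hx T hT
    rw [norm_neg, Real.norm_eq_abs, abs_div,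
      abs_of_pos (a := (x + s T) ^ 2) (pow_pos (by linarith) 2)]
    exact div_le_div_of_nonneg_left (abs_nonneg _) (by positivity)
      (pow_le_pow_left₀ (by positivity) h.le 2)
  · exact (hg.abs.div_const _).intervalIntegrable
  · refine ae_of_all _ fun T hT x hx => ?_
    refine ((hasDerivAt_const x (g T)).div ((hasDerivAt_id' x).add_const (s T))
      (by linarith [hpos x hx T hT])).congr_deriv ?_
    ring

theorem integral_div_add_sub_integral_div_add (hg : ContinuousOn g [[α, β]])
    (hs : ContinuousOn s [[α, β]]) (hs0 : ∀ T ∈ [[α, β]], 0 ≤ s T) {x y : ℝ}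
    (hx : 0 < x) (hy : 0 < y) :
    (∫ T in α..β, g T / (x + s T)) - ∫ T in α..β, g T / (y + s T) =
      (y - x) * ∫ T in α..β, g T / (x + s T) / (y + s T) := by
  rw [← intervalIntegral.integral_sub (continuousOn_div_add hg hs hs0 hx).intervalIntegrable
    (continuousOn_div_add hg hs hs0 hy).intervalIntegrable, ← intervalIntegral.integral_const_mul]
  refine intervalIntegral.integral_congr fun T hT => ?_
  have := hs0 T hT
  field_simp
  ring

/-- The ansatz `W` in the variable `x = √(X + c)`, with `r = √Z`, `s T = √(T + c)`, `g = ρ / s`. -/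
theorem ansatz_sub_div_sq_sub_sq (hg : ContinuousOn g [[α, β]])
    (hs : ContinuousOn s [[α, β]]) (hs0 : ∀ T ∈ [[α, β]], 0 ≤ s T) (r ν : ℝ) {x y : ℝ}
    (hx : 0 < x) (hy : 0 < y) (hxy : x ≠ y) :
    ((x / r - ν + 1 / 2 * ∫ T in α..β, g T / (x + s T)) -
        (y / r - ν + 1 / 2 * ∫ T in α..β, g T / (y + s T))) / (x ^ 2 - y ^ 2) =
      (1 / r - 1 / 2 * ∫ T in α..β, g T / (x + s T) / (y + s T)) / (x + y) := by
  have hdiff := integral_div_add_sub_integral_div_add hg hs hs0 hx hy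
  rw [sq_sub_sq, div_mul_eq_div_div_swap, div_left_inj' (by positivity),
    div_eq_iff (sub_ne_zero.2 hxy)]
  linear_combination (1 / 2 : ℝ) * hdiff

theorem hasDerivAt_ansatz_slope (hg : ContinuousOn g [[α, β]])
    (hs : ContinuousOn s [[α, β]]) (hs0 : ∀ T ∈ [[α, β]], 0 ≤ s T) (r : ℝ) {x y : ℝ}
    (hx : 0 < x) (hy : 0 < y) :
    HasDerivAt (fun z => (1 / r - 1 / 2 * ∫ T in α..β, g T / (z + s T)) / (x + z))
      ((1 / 2 * (∫ T in α..β, g T / (y + s T) ^ 2) * (x + y) -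
        (1 / r - 1 / 2 * ∫ T in α..β, g T / (y + s T))) / (x + y) ^ 2) y :=
  (((hasDerivAt_integral_div_add hg hs hs0 hy).const_mul (1 / 2)).const_sub (1 / r)).div
    ((hasDerivAt_id' y).const_add x) (by positivity) |>.congr_deriv (by ring)

theorem continuousOn_partial_fractions (hg : ContinuousOn g [[α, β]])
    (hs : ContinuousOn s [[α, β]]) (hs0 : ∀ T ∈ [[α, β]], 0 ≤ s T) {y : ℝ} (hy : 0 < y)
    (C₀ C₁ C₂ : ℝ) :
    ContinuousOn (fun T => C₀ * g T + C₁ * (g T / (y + s T)) + C₂ * (g T / (y + s T) ^ 2))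
      [[α, β]] :=
  ((continuousOn_const.mul hg).add (continuousOn_const.mul (continuousOn_div_add hg hs hs0 hy))).add
    (continuousOn_const.mul (continuousOn_div_add_pow hg hs hs0 hy 2))

theorem integral_partial_fractions (hg : ContinuousOn g [[α, β]])
    (hs : ContinuousOn s [[α, β]]) (hs0 : ∀ T ∈ [[α, β]], 0 ≤ s T) {y : ℝ} (hy : 0 < y)
    (C₀ C₁ C₂ : ℝ) :
    ∫ T in α..β, (C₀ * g T + C₁ * (g T / (y + s T)) + C₂ * (g T / (y + s T) ^ 2)) =
      C₀ * (∫ T in α..β, g T) + C₁ * (∫ T in α..β, g T / (y + s T)) +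
        C₂ * ∫ T in α..β, g T / (y + s T) ^ 2 := by
  have h₁ := (continuousOn_div_add hg hs hs0 hy).intervalIntegrable (μ := volume)
  have h₂ := (continuousOn_div_add_pow hg hs hs0 hy 2).intervalIntegrable (μ := volume)
  rw [intervalIntegral.integral_add ((hg.intervalIntegrable.const_mul _).add (h₁.const_mul _))
      (h₂.const_mul _),
    intervalIntegral.integral_add (hg.intervalIntegrable.const_mul _) (h₁.const_mul _)]
  simp only [intervalIntegral.integral_const_mul]

end ParametricIntegral

/-- `k / (u v (u + v)²)` is `G₂(U|V)` for `k = 4λ²`, `u = √(U + c)`, `v = √(V + c)`; the right-hand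
side is the continuous extension of the divided difference to `u = a`. -/
theorem two_point_divided_difference {a u b : ℝ} (ha : 0 < a) (hu : 0 < u) (hb : 0 < b)
    (hau : a ≠ u) (k r : ℝ) :
    r * (k / (a * b * (a + b) ^ 2) - k / (u * b * (u + b) ^ 2)) / (a ^ 2 - u ^ 2) =
      -k * (1 / (a * b * (a + b) ^ 2) * (r / u / (a + u)) +
        1 / (b * (a + b) ^ 2) * (r / u / (a + u) / (b + u)) +
        1 / (b * (a + b)) * (r / u / (a + u) / (b + u) ^ 2)) := by
  have : a ^ 2 - u ^ 2 ≠ 0 := by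
    rw [sq_sub_sq]
    exact mul_ne_zero (by positivity) (sub_ne_zero.2 hau)
  field_simp
  ring

theorem sub_eq_sqrt_add_sq_sub_sqrt_add_sq {c X T : ℝ} (hX : 0 ≤ X + c) (hT : 0 ≤ T + c) :
    X - T = √(X + c) ^ 2 - √(T + c) ^ 2 := by
  rw [Real.sq_sqrt hX, Real.sq_sqrt hT]
  ring

theorem sqrt_add_ne_sqrt_add {c X T : ℝ} (hX : 0 ≤ X + c) (hT : 0 ≤ T + c) (h : X ≠ T) :
    √(X + c) ≠ √(T + c) := fun h' => h (by linarith [(Real.sqrt_inj hX hT).1 h'])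

theorem stmt_7 (Ξ c Z ν lam : ℝ) (hΞ : 1 < Ξ) (hc : -1 < c)
    (ρ : ℝ → ℝ) (hρ : ContinuousOn ρ (Set.Icc 1 Ξ))
    (W : ℝ → ℝ)
    (hW : ∀ X, W X = Real.sqrt (X + c) / Real.sqrt Z - ν +
      (1 / 2) * ∫ T in (1 : ℝ)..Ξ,
        ρ T / ((Real.sqrt (X + c) + Real.sqrt (T + c)) * Real.sqrt (T + c)))
    (G₂ : ℝ → ℝ → ℝ)
    (hG₂ : ∀ U V, G₂ U V = 4 * lam ^ 2 /
      (Real.sqrt (U + c) * Real.sqrt (V + c) * (Real.sqrt (U + c) + Real.sqrt (V + c)) ^ 2))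
    (G₃ : ℝ → ℝ → ℝ)
    (hG₃ : ∀ X Y, X ≠ Y →
      G₃ X Y = 8 * lam * deriv (fun Y' => (W X - W Y') / (X - Y')) Y) :
    ∀ X Y, 1 ≤ X → 1 ≤ Y → X ≠ Y →
      ∃ F : ℝ → ℝ, ContinuousOn F (Set.Icc 1 Ξ) ∧
        (∀ T ∈ Set.Icc 1 Ξ, T ≠ X → F T = ρ T * (G₂ X Y - G₂ T Y) / (X - T)) ∧
        (W X + ν) * G₂ X Y = -lam * G₃ X Y - (1 / 2) * ∫ T in (1 : ℝ)..Ξ, F T := by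
  intro X Y hX hY hXY
  have hI : [[1, Ξ]] = Icc 1 Ξ := uIcc_of_le hΞ.le
  have hs : ContinuousOn (fun T => √(T + c)) [[1, Ξ]] := by fun_prop
  have hs0 : ∀ T ∈ [[(1 : ℝ), Ξ]], 0 ≤ √(T + c) := fun T _ => Real.sqrt_nonneg _
  have hg : ContinuousOn (fun T => ρ T / √(T + c)) [[1, Ξ]] := by
    rw [hI]
    exact hρ.div (by fun_prop) fun T hT => (Real.sqrt_pos.2 (by linarith [hT.1])).ne'
  have hW' : ∀ X, W X = √(X + c) / √Z - ν +
      1 / 2 * ∫ T in (1 : ℝ)..Ξ, ρ T / √(T + c) / (√(X + c) + √(T + c)) := by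
    simp only [hW, div_mul_eq_div_div_swap, implies_true]
  set a := √(X + c) with ha_def
  set b := √(Y + c) with hb_def
  have ha : 0 < a := Real.sqrt_pos.2 (by linarith)
  have hb : 0 < b := Real.sqrt_pos.2 (by linarith)
  set f : ℝ → ℝ := fun T => ρ T / √(T + c) / (a + √(T + c))
  have hf : ContinuousOn f [[1, Ξ]] := continuousOn_div_add hg hs hs0 ha
  have hquot : (fun Y' => (W X - W Y') / (X - Y')) =ᶠ[nhds Y] fun Y' =>
      (1 / √Z - 1 / 2 * ∫ T in (1 : ℝ)..Ξ, f T / (√(Y' + c) + √(T + c))) / (a + √(Y' + c)) := by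
    filter_upwards [eventually_gt_nhds (show -c < Y by linarith), eventually_ne_nhds hXY.symm]
      with Y' hY'c hY'X
    rw [hW' X, hW' Y',
      sub_eq_sqrt_add_sq_sub_sqrt_add_sq (c := c) (T := Y') (by linarith) (by linarith)]
    exact ansatz_sub_div_sq_sub_sq hg hs hs0 _ _ ha (Real.sqrt_pos.2 (by linarith))
      (sqrt_add_ne_sqrt_add (by linarith) (by linarith) hY'X.symm)
  have hslope := (hasDerivAt_ansatz_slope hf hs hs0 (√Z) ha hb).comp Y
    (((hasDerivAt_id' Y).add_const c).sqrt (by linarith))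
  set F : ℝ → ℝ := fun T => -(4 * lam ^ 2) * (1 / (a * b * (a + b) ^ 2) * f T +
    1 / (b * (a + b) ^ 2) * (f T / (b + √(T + c))) +
    1 / (b * (a + b)) * (f T / (b + √(T + c)) ^ 2)) with hF_def
  refine ⟨F, ?_, fun T hT hTX => ?_, ?_⟩
  · rw [← hI]
    exact continuousOn_const.mul (continuousOn_partial_fractions hf hs hs0 hb _ _ _)
  · have hTc : 0 ≤ T + c := by linarith [hT.1]
    rw [hG₂, hG₂, sub_eq_sqrt_add_sq_sub_sqrt_add_sq (X := X) (c := c) (by linarith) hTc,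
      two_point_divided_difference ha (Real.sqrt_pos.2 (by linarith [hT.1])) hb
        (sqrt_add_ne_sqrt_add (by linarith) hTc hTX.symm)]
  · have hWX : W X + ν = a / √Z + 1 / 2 * ∫ T in (1 : ℝ)..Ξ, f T := by rw [hW' X]; ring
    rw [hG₃ X Y hXY, hquot.deriv_eq.trans hslope.deriv, hF_def, intervalIntegral.integral_const_mul,
      integral_partial_fractions hf hs hs0 hb, hWX, hG₂, ← ha_def, ← hb_def]
    field_simp
    ring
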